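/- Let K be an s-hierarchical ordered domain, let M' be an s-hierarchical ordered K-module, and let M be an initial submodule of M' (a K-submodule of M' that is an initial subtree of ⟨M', <_s⟩). Suppose (L, R) is a partition of M with L < R, and suppose b ∈ M' is the simplest element of M' lying between L and R, i.e., b = {L | R} computed in M'. Then the K-submodule of M' generated by M ∪ {b} is an initial subtree of M' (and hence an initial submodule of M'). -/

import Mathlib

universe u v

section Tree

variable {α : Type u}

/-- The set of strict tree-predecessors of `x` under the relation `s`. -/
def treePred (s : α → α → Prop) (x : α) : Set α := {y | s y x}

/-- `⟨α, s⟩` is a tree: `s` is a strict partial order each of whose predecessor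
sets is well-ordered by `s`. -/
structure IsTreeOrd (s : α → α → Prop) : Prop where
  irrefl : ∀ x, ¬ s x x
  trans : ∀ {x y z}, s x y → s y z → s x z
  predWO : ∀ x : α, IsWellOrder (treePred s x) fun a b => s a.1 b.1

/-- The tree-rank of `x`: the order type of its set of predecessors. -/
noncomputable def treeRank (s : α → α → Prop) (h : IsTreeOrd s) (x : α) : Ordinal :=
  @Ordinal.type (treePred s x) (fun a b => s a.1 b.1) (h.predWO x)

/-- `y` is an immediate successor of `x`. -/
def IsImmSucc (s : α → α → Prop) (h : IsTreeOrd s) (x y : α) : Prop :=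
  s x y ∧ treeRank s h y = treeRank s h x + 1

/-- `C` is a chain (a subclass totally ordered by `s`). -/
def IsTreeChain (s : α → α → Prop) (C : Set α) : Prop :=
  ∀ x ∈ C, ∀ y ∈ C, x ≠ y → s x y ∨ s y x

/-- `C` is a chain of limit length. -/
def IsLimitChain (s : α → α → Prop) (C : Set α) : Prop :=
  IsTreeChain s C ∧ ∃ hwo : IsWellOrder C fun a b => s a.1 b.1,
    Order.IsSuccLimit (@Ordinal.type C (fun a b => s a.1 b.1) hwo)

/-- `y` is an immediate successor of the chain `C`. -/
def IsChainImmSucc (s : α → α → Prop) (h : IsTreeOrd s) (C : Set α) (y : α) : Prop :=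
  (∀ x ∈ C, s x y) ∧
    IsLeast {o : Ordinal | ∀ x ∈ C, treeRank s h x < o} (treeRank s h y)

/-- `⟨α, s⟩` is a binary tree. -/
structure IsBinaryTree (s : α → α → Prop) : Prop where
  toIsTreeOrd : IsTreeOrd s
  succ_binary : ∀ x a b c : α, IsImmSucc s toIsTreeOrd x a → IsImmSucc s toIsTreeOrd x b →
    IsImmSucc s toIsTreeOrd x c → a = b ∨ a = c ∨ b = c
  chain_succ_unique : ∀ C : Set α, IsLimitChain s C → ∀ y z : α,
    IsChainImmSucc s toIsTreeOrd C y → IsChainImmSucc s toIsTreeOrd C z → y = z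

variable [LinearOrder α]

/-- `L_s(x)`: the predecessors of `x` lying below `x`. -/
def Lopts (s : α → α → Prop) (x : α) : Set α := {a | s a x ∧ a < x}

/-- `R_s(x)`: the predecessors of `x` lying above `x`. -/
def Ropts (s : α → α → Prop) (x : α) : Set α := {a | s a x ∧ x < a}

/-- `⟨α, <, s⟩` is a lexicographically ordered binary tree. -/
structure IsLexBinTree (s : α → α → Prop) : Prop where
  toIsBinaryTree : IsBinaryTree s
  lex : ∀ x y : α, x ≠ y →
    ((¬ s x y ∧ ¬ s y x) ↔ ∃ z, s z x ∧ s z y ∧ (x < z ∧ z < y ∨ y < z ∧ z < x))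

/-- `x = {L | R}`: `x` is the simplest element lying between `L` and `R`. -/
def IsSimplest (s : α → α → Prop) (L R : Set α) (x : α) : Prop :=
  (∀ l ∈ L, l < x) ∧ (∀ r ∈ R, x < r) ∧
    ∀ y, y ≠ x → (∀ l ∈ L, l < y) → (∀ r ∈ R, y < r) → s x y

/-- `B` is an initial subtree: it is closed under `s`-predecessors. -/
def IsInitialSubtree (s : α → α → Prop) (B : Set α) : Prop :=
  ∀ x ∈ B, ∀ y, s y x → y ∈ B

end Tree

/-- s-hierarchical ordered group. -/
structure IsSHGroup (α : Type u) [AddCommGroup α] [LinearOrder α] [IsOrderedAddMonoid α] (s : α → α → Prop) : Prop where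
  lexBin : IsLexBinTree s
  add_eq : ∀ x y : α, IsSimplest s
    ({z | ∃ x' ∈ Lopts s x, z = x' + y} ∪ {z | ∃ y' ∈ Lopts s y, z = x + y'})
    ({z | ∃ x'' ∈ Ropts s x, z = x'' + y} ∪ {z | ∃ y'' ∈ Ropts s y, z = x + y''})
    (x + y)

/-- s-hierarchical ordered domain. -/
structure IsSHDomain (α : Type u) [CommRing α] [LinearOrder α] [IsStrictOrderedRing α] (s : α → α → Prop) : Prop where
  toIsSHGroup : IsSHGroup α s
  mul_eq : ∀ x y : α, IsSimplest s
    ({z | ∃ x' ∈ Lopts s x, ∃ y' ∈ Lopts s y, z = x' * y + x * y' - x' * y'} ∪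
     {z | ∃ x'' ∈ Ropts s x, ∃ y'' ∈ Ropts s y, z = x'' * y + x * y'' - x'' * y''})
    ({z | ∃ x' ∈ Lopts s x, ∃ y'' ∈ Ropts s y, z = x' * y + x * y'' - x' * y''} ∪
     {z | ∃ x'' ∈ Ropts s x, ∃ y' ∈ Lopts s y, z = x'' * y + x * y' - x'' * y'})
    (x * y)

/-- s-hierarchical ordered field. -/
def IsSHField (α : Type u) [Field α] [LinearOrder α] [IsStrictOrderedRing α] (s : α → α → Prop) : Prop :=
  IsSHDomain α s

section Hahn

variable {Γ : Type*} [LinearOrder Γ]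

/-- The series `r·t^y` in `ℝ((t^Γ))` (represented with exponents in `Γᵒᵈ`, so that
supports are well-ordered under the reverse order `>` of `Γ`). -/
noncomputable def tpow (y : Γ) (r : ℝ) : HahnSeries Γᵒᵈ ℝ :=
  HahnSeries.single (OrderDual.toDual y) r

/-- Truncation of a Hahn series at `γ`: keep exactly the coefficients at exponents `> γ`. -/
noncomputable def htrunc (x : HahnSeries Γᵒᵈ ℝ) (γ : Γ) : HahnSeries Γᵒᵈ ℝ where
  coeff g := if γ < OrderDual.ofDual g then x.coeff g else 0
  isPWO_support' := x.isPWO_support.mono (by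
    intro g hg
    simp only [Function.mem_support] at hg ⊢
    intro h
    simp [h] at hg)

/-- The leading coefficient of a Hahn series: its coefficient at the greatest
element of its support (`0` for the zero series). -/
noncomputable def leadCoeff (x : HahnSeries Γᵒᵈ ℝ) : ℝ :=
  letI := Classical.dec (x = 0)
  if h : x = 0 then 0
  else x.coeff (x.isWF_support.min (HahnSeries.support_nonempty_iff.2 h))

/-- A Hahn series is positive iff its leading coefficient is positive. -/
def HahnPos (x : HahnSeries Γᵒᵈ ℝ) : Prop := x ≠ 0 ∧ 0 < leadCoeff x

/-- The order type of the support of a Hahn series, well-ordered by the reverse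
order of `Γ`. -/
noncomputable def suppOrderType (x : HahnSeries Γᵒᵈ ℝ) : Ordinal :=
  @Ordinal.type x.support (fun a b => (a : Γᵒᵈ) < (b : Γᵒᵈ))
    { trichotomous := fun a b hab hba =>
        Subtype.ext (le_antisymm (not_lt.1 hba) (not_lt.1 hab))
      wf := x.isWF_support }

end Hahn

/-- The set of dyadic rational real numbers. -/
def Dyadics : Set ℝ := {x | ∃ (z : ℤ) (m : ℕ), x = z / 2 ^ m}

/-- `H` is an initial subgroup of `ℝ`: it is `{0}`, or `{z/2^m : z ∈ ℤ}` for some `m`,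
or it contains all dyadic rationals. -/
def IsInitialRealSubgroup (H : Set ℝ) : Prop :=
  H = {0} ∨ (∃ m : ℕ, H = {x : ℝ | ∃ z : ℤ, x = (z : ℝ) / 2 ^ m}) ∨ Dyadics ⊆ H

section AuxLemmas

variable {A : Type*}

theorem isTreeOrd_wf {s : A → A → Prop} (h : IsTreeOrd s) : WellFounded s := by
  have key : ∀ x : A, ∀ y ∈ treePred s x, Acc s y := by
    intro x
    have hw : WellFounded (fun a b : treePred s x => s a.1 b.1) :=
      (h.predWO x).toIsWellFounded.wf
    have main : ∀ z : treePred s x, Acc s z.1 := by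
      intro z
      refine hw.induction (C := fun z => Acc s z.1) z ?_
      intro z ih
      exact Acc.intro z.1 fun w hw' =>
        ih ⟨w, show w ∈ treePred s x from h.trans hw' z.2⟩ hw'
    exact fun y hy => main ⟨y, hy⟩
  exact ⟨fun x => Acc.intro x fun y hy => key x y hy⟩

variable [LinearOrder A] {s : A → A → Prop}

theorem sandwich_left (h : IsLexBinTree s) {p q x : A}
    (hpq : s p q) (hqx : s q x) (hlt : q < p) : x < p := by
  have t := h.toIsBinaryTree.toIsTreeOrd
  have hpx : s p x := t.trans hpq hqx
  have hxp : x ≠ p := fun e => t.irrefl p (e ▸ hpx)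
  by_contra hc
  have hpltx : p < x := lt_of_le_of_ne (not_lt.mp hc) (Ne.symm hxp)
  have hqnex : q ≠ x := fun e => t.irrefl q (e ▸ hqx)
  have := (h.lex q x hqnex).mpr ⟨p, hpq, hpx, Or.inl ⟨hlt, hpltx⟩⟩
  exact this.1 hqx

theorem sandwich_right (h : IsLexBinTree s) {p q x : A}
    (hpq : s p q) (hqx : s q x) (hlt : p < q) : p < x := by
  have t := h.toIsBinaryTree.toIsTreeOrd
  have hpx : s p x := t.trans hpq hqx
  have hxp : x ≠ p := fun e => t.irrefl p (e ▸ hpx)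
  by_contra hc
  have hxltp : x < p := lt_of_le_of_ne (not_lt.mp hc) hxp
  have hqnex : q ≠ x := fun e => t.irrefl q (e ▸ hqx)
  have := (h.lex q x hqnex).mpr ⟨p, hpq, hpx, Or.inr ⟨hxltp, hlt⟩⟩
  exact this.1 hqx

theorem simplest_pred (h : IsLexBinTree s) {SL SR : Set A} {a : A}
    (hs : IsSimplest s SL SR a) {p : A} (hp : s p a) :
    ∃ w ∈ SL ∪ SR, p = w ∨ s p w := by
  have t := h.toIsBinaryTree.toIsTreeOrd
  have hpa : p ≠ a := fun e => t.irrefl a (e ▸ hp)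
  have hnb : ¬ ((∀ l ∈ SL, l < p) ∧ (∀ r ∈ SR, p < r)) := fun ⟨h1, h2⟩ =>
    t.irrefl p (t.trans hp (hs.2.2 p hpa h1 h2))
  by_cases hL : ∀ l ∈ SL, l < p
  · have hR : ∃ r ∈ SR, r ≤ p := by
      by_contra hc
      push_neg at hc
      exact hnb ⟨hL, hc⟩
    obtain ⟨r, hrR, hrp⟩ := hR
    have har : a < r := hs.2.1 r hrR
    refine ⟨r, Or.inr hrR, ?_⟩
    rcases eq_or_lt_of_le hrp with heq | hrlt
    · exact Or.inl heq.symm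
    · by_contra hcon
      push_neg at hcon
      obtain ⟨hne, hnspr⟩ := hcon
      by_cases hsrp : s r p
      · exact absurd (sandwich_right h hsrp hp hrlt) (lt_asymm har)
      · obtain ⟨z, hzp, hzr, hz⟩ := (h.lex p r hne).mp ⟨hnspr, hsrp⟩
        rcases hz with ⟨hpz, hzr'⟩ | ⟨hrz, hzp'⟩
        · exact absurd (hpz.trans hzr') (lt_asymm hrlt)
        · exact absurd (sandwich_right h hzp hp hzp') (lt_asymm (har.trans hrz))
  · push_neg at hL
    obtain ⟨l, hlL, hpl⟩ := hL
    have hla : l < a := hs.1 l hlL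
    refine ⟨l, Or.inl hlL, ?_⟩
    rcases eq_or_lt_of_le hpl with heq | hplt
    · exact Or.inl heq
    · by_contra hcon
      push_neg at hcon
      obtain ⟨hne, hnspl⟩ := hcon
      by_cases hslp : s l p
      · exact absurd (sandwich_left h hslp hp hplt) (lt_asymm hla)
      · obtain ⟨z, hzp, hzl, hz⟩ := (h.lex p l hne).mp ⟨hnspl, hslp⟩
        rcases hz with ⟨hpz, hzl'⟩ | ⟨hlz, hzp'⟩
        · exact absurd (sandwich_left h hzp hp hpz) (lt_asymm (hzl'.trans hla))
        · exact absurd (hlz.trans hzp') (lt_asymm hplt)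

end AuxLemmas

/-- s-hierarchical ordered `K`-module. -/
structure IsSHModule (K : Type u) (M : Type v) [CommRing K] [LinearOrder K] [IsStrictOrderedRing K]
    [AddCommGroup M] [LinearOrder M] [IsOrderedAddMonoid M] [Module K M]
    (sK : K → K → Prop) (sM : M → M → Prop) : Prop where
  domK : IsSHDomain K sK
  grpM : IsSHGroup M sM
  ordered_smul : ∀ (c : K) (m : M), 0 ≤ c → 0 ≤ m → 0 ≤ c • m
  smul_eq : ∀ (x : K) (y : M), IsSimplest sM
    ({z | ∃ x' ∈ Lopts sK x, ∃ y' ∈ Lopts sM y, z = x' • y + x • y' - x' • y'} ∪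
     {z | ∃ x'' ∈ Ropts sK x, ∃ y'' ∈ Ropts sM y, z = x'' • y + x • y'' - x'' • y''})
    ({z | ∃ x' ∈ Lopts sK x, ∃ y'' ∈ Ropts sM y, z = x' • y + x • y'' - x' • y''} ∪
     {z | ∃ x'' ∈ Ropts sK x, ∃ y' ∈ Lopts sM y, z = x'' • y + x • y' - x'' • y'})
    (x • y)

/-- If `M` is an initial submodule of an s-hierarchical ordered `K`-module `M'`,
`(L, R)` is a partition of `M` with `L < R`, and `b = {L | R}` in `M'`, then the
`K`-submodule of `M'` generated by `M ∪ {b}` is an initial subtree (hence an initial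
submodule) of `M'`. -/
theorem stmt10 {K : Type u} {M' : Type v} [CommRing K] [LinearOrder K] [IsStrictOrderedRing K]
    [AddCommGroup M'] [LinearOrder M'] [IsOrderedAddMonoid M'] [Module K M']
    (sK : K → K → Prop) (sM : M' → M' → Prop) (h : IsSHModule K M' sK sM)
    (M : Submodule K M') (hM : IsInitialSubtree sM (M : Set M'))
    (L R : Set M') (hunion : L ∪ R = (M : Set M')) (hdisj : L ∩ R = ∅)
    (hLR : ∀ l ∈ L, ∀ r ∈ R, l < r)
    (b : M') (hb : IsSimplest sM L R b) :
    IsInitialSubtree sM (Submodule.span K ((M : Set M') ∪ {b}) : Set M') := by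
  have tM : IsTreeOrd sM := h.grpM.lexBin.toIsBinaryTree.toIsTreeOrd
  have tK : IsTreeOrd sK := h.domK.toIsSHGroup.lexBin.toIsBinaryTree.toIsTreeOrd
  have wfM := isTreeOrd_wf tM
  have wfK := isTreeOrd_wf tK
  -- every tree-predecessor of b lies in M
  have hbM : ∀ z, sM z b → z ∈ M := by
    intro z hz
    obtain ⟨w, hw, hcase⟩ := simplest_pred h.grpM.lexBin hb hz
    rw [hunion] at hw
    rcases hcase with rfl | hzw
    · exact hw
    · exact hM w hw z hzw
  -- description of the span
  have hspan : ∀ a : M', a ∈ Submodule.span K ((M : Set M') ∪ {b}) ↔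
      ∃ x ∈ M, ∃ c : K, a = x + c • b := by
    intro a
    rw [Submodule.span_union, Submodule.span_eq, Submodule.mem_sup]
    constructor
    · rintro ⟨y, hy, z, hz, rfl⟩
      rw [Submodule.mem_span_singleton] at hz
      obtain ⟨c, rfl⟩ := hz
      exact ⟨y, hy, c, rfl⟩
    · rintro ⟨x, hx, c, rfl⟩
      exact ⟨x, hx, c • b, Submodule.mem_span_singleton.2 ⟨c, rfl⟩, rfl⟩
  -- main lemma: predecessors of x + c • b, for x ∈ M, have the form m + c₂ • b
  have main : ∀ cx : K × M', cx.2 ∈ M → ∀ p, sM p (cx.2 + cx.1 • b) →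
      ∃ m ∈ M, ∃ c₂ : K, (c₂ = cx.1 ∨ sK c₂ cx.1) ∧ p = m + c₂ • b := by
    intro cx
    refine (wfK.prod_lex wfM).induction
      (C := fun cx => cx.2 ∈ M → ∀ p, sM p (cx.2 + cx.1 • b) →
        ∃ m ∈ M, ∃ c₂ : K, (c₂ = cx.1 ∨ sK c₂ cx.1) ∧ p = m + c₂ • b) cx ?_
    rintro ⟨c, x⟩ IH hxM p hp
    obtain ⟨w, hw, hcw⟩ := simplest_pred h.grpM.lexBin (h.grpM.add_eq x (c • b)) hp
    simp only [Set.mem_union, Set.mem_setOf_eq, Lopts, Ropts] at hw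
    have hw' : (∃ x', sM x' x ∧ w = x' + c • b) ∨ (∃ u, sM u (c • b) ∧ w = x + u) := by
      rcases hw with (⟨x', hx', he⟩ | ⟨u, hu, he⟩) | (⟨x', hx', he⟩ | ⟨u, hu, he⟩)
      · exact Or.inl ⟨x', hx'.1, he⟩
      · exact Or.inr ⟨u, hu.1, he⟩
      · exact Or.inl ⟨x', hx'.1, he⟩
      · exact Or.inr ⟨u, hu.1, he⟩
    rcases hw' with ⟨x', hx'x, rfl⟩ | ⟨u, hu, rfl⟩
    · -- w = x' + c • b with x' a predecessor of x
      have hx'M : x' ∈ M := hM x hxM x' hx'x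
      rcases hcw with rfl | hpw
      · exact ⟨x', hx'M, c, Or.inl rfl, rfl⟩
      · exact IH (c, x') (Prod.Lex.right _ hx'x) hx'M p hpw
    · -- w = x + u with u a predecessor of c • b
      obtain ⟨v, hv, hcv⟩ := simplest_pred h.grpM.lexBin (h.smul_eq c b) hu
      simp only [Set.mem_union, Set.mem_setOf_eq, Lopts, Ropts] at hv
      have hv' : ∃ c', sK c' c ∧ ∃ b', sM b' b ∧ v = c' • b + c • b' - c' • b' := by
        rcases hv with (⟨c', hc', b', hb', he⟩ | ⟨c', hc', b', hb', he⟩) |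
          (⟨c', hc', b', hb', he⟩ | ⟨c', hc', b', hb', he⟩) <;>
          exact ⟨c', hc'.1, b', hb'.1, he⟩
      obtain ⟨c', hc'c, b', hb'b, rfl⟩ := hv'
      have hb'M : b' ∈ M := hbM b' hb'b
      have hmvM : (c • b' - c' • b') ∈ M := M.sub_mem (M.smul_mem c hb'M) (M.smul_mem c' hb'M)
      have hveq : c' • b + c • b' - c' • b' = (c • b' - c' • b') + c' • b := by
        rw [add_sub_assoc, add_comm]
      have hurep : ∃ m_u ∈ M, ∃ c_u : K, sK c_u c ∧ u = m_u + c_u • b := by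
        rcases hcv with rfl | huv
        · exact ⟨c • b' - c' • b', hmvM, c', hc'c, hveq⟩
        · rw [hveq] at huv
          obtain ⟨m_u, hm_u, c_u, hcu, rfl⟩ :=
            IH (c', c • b' - c' • b') (Prod.Lex.left _ _ hc'c) hmvM u huv
          refine ⟨m_u, hm_u, c_u, ?_, rfl⟩
          rcases hcu with rfl | hcu
          · exact hc'c
          · exact tK.trans hcu hc'c
      obtain ⟨m_u, hm_u, c_u, hcuc, rfl⟩ := hurep
      have hxmu : x + m_u ∈ M := M.add_mem hxM hm_u
      have hweq : x + (m_u + c_u • b) = (x + m_u) + c_u • b := (add_assoc _ _ _).symm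
      rcases hcw with rfl | hpw
      · exact ⟨x + m_u, hxmu, c_u, Or.inr hcuc, hweq⟩
      · rw [hweq] at hpw
        obtain ⟨m, hm, c₂, hc₂, rfl⟩ := IH (c_u, x + m_u) (Prod.Lex.left _ _ hcuc) hxmu p hpw
        refine ⟨m, hm, c₂, Or.inr ?_, rfl⟩
        rcases hc₂ with rfl | hc₂
        · exact hcuc
        · exact tK.trans hc₂ hcuc
  -- conclude
  intro a ha p hp
  rw [SetLike.mem_coe, hspan] at ha ⊢
  obtain ⟨x, hx, c, rfl⟩ := ha
  obtain ⟨m, hm, c₂, _, rfl⟩ := main (c, x) hx p hp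
  exact ⟨m, hm, c₂, rfl⟩
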